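/- Assume the antilinear system Σₐ is stabilizable and P ∈ ℂ^{n×n} is a Hermitian positive definite solution of the anti-Riccati equation −Q = A₂^H P^# A₂ − A₂^H P^# B₂ (R + B₂^H P^# B₂)^{-1} B₂^H P^# A₂ − P. Then X = Q₀^{-1/2} (P^{-1} + (A₂ Q^{-1} A₂^H)^# + (B₂ R^{-1} B₂^H)^#) Q₀^{-1/2} is the maximal Hermitian positive definite solution of the nonlinear matrix equation X + A^H X^{-#} A = I_n with A = Q₀^{-#/2} A₂ Q^{-1} Q₀^{-1/2}; that is, every Hermitian positive definite matrix Y satisfying Y + A^H Y^{-#} A = I_n satisfies Y ≤ X in the Loewner order. -/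

import Mathlib

open Matrix Filter Topology
open scoped ENNReal ComplexOrder

noncomputable section

/-- Entrywise complex conjugate of a matrix, `M^#`. -/
def mconj {k l : Type*} (A : Matrix k l ℂ) : Matrix k l ℂ := A.map (starRingEnd ℂ)

variable {n m : ℕ}

/-- The antilinear system `x(k+1) = A₂^# x^#(k) + B₂^# u^#(k)` is stabilizable if some
feedback `u(k) = K₁x(k) + K₂^#x^#(k)` drives every closed-loop solution to zero. -/
def AntiStabilizable (A₂ : Matrix (Fin n) (Fin n) ℂ) (B₂ : Matrix (Fin n) (Fin m) ℂ) :
    Prop :=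
  ∃ K₁ K₂ : Matrix (Fin m) (Fin n) ℂ, ∀ x : ℕ → (Fin n → ℂ),
    (∀ k : ℕ, x (k + 1) =
        mconj A₂ *ᵥ star (x k) + mconj B₂ *ᵥ star (K₁ *ᵥ x k + mconj K₂ *ᵥ star (x k))) →
    Tendsto x atTop (𝓝 0)

/-- The trajectory of the antilinear system `x(k+1) = A₂^# x^#(k) + B₂^# u^#(k)` from
the initial condition `x₀` under the control sequence `u`. -/
def atraj (A₂ : Matrix (Fin n) (Fin n) ℂ) (B₂ : Matrix (Fin n) (Fin m) ℂ)
    (x₀ : Fin n → ℂ) (u : ℕ → Fin m → ℂ) : ℕ → Fin n → ℂ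
  | 0 => x₀
  | k + 1 => mconj A₂ *ᵥ star (atraj A₂ B₂ x₀ u k) + mconj B₂ *ᵥ star (u k)

/-- The quadratic cost `J = Σ_k (x(k)^H Q x(k) + u(k)^H R u(k))`, valued in `[0,∞]`. -/
def cost (Q : Matrix (Fin n) (Fin n) ℂ) (R : Matrix (Fin m) (Fin m) ℂ)
    (x : ℕ → Fin n → ℂ) (u : ℕ → Fin m → ℂ) : ℝ≥0∞ :=
  ∑' k : ℕ, ENNReal.ofReal ((star (x k) ⬝ᵥ (Q *ᵥ x k)).re + (star (u k) ⬝ᵥ (R *ᵥ u k)).re)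

/-- The LQR problem for the antilinear system is solvable: for every initial condition
there is a control of finite cost minimizing the cost. -/
def LQRSolvable (A₂ : Matrix (Fin n) (Fin n) ℂ) (B₂ : Matrix (Fin n) (Fin m) ℂ)
    (Q : Matrix (Fin n) (Fin n) ℂ) (R : Matrix (Fin m) (Fin m) ℂ) : Prop :=
  ∀ x₀ : Fin n → ℂ, ∃ u : ℕ → Fin m → ℂ,
    cost Q R (atraj A₂ B₂ x₀ u) u < ⊤ ∧
    ∀ u' : ℕ → Fin m → ℂ, cost Q R (atraj A₂ B₂ x₀ u) u ≤ cost Q R (atraj A₂ B₂ x₀ u') u'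

/-- The anti-Riccati equation
`-Q = A₂^H P^# A₂ - A₂^H P^# B₂ (R + B₂^H P^# B₂)⁻¹ B₂^H P^# A₂ - P`. -/
def AntiRiccati (A₂ : Matrix (Fin n) (Fin n) ℂ) (B₂ : Matrix (Fin n) (Fin m) ℂ)
    (Q : Matrix (Fin n) (Fin n) ℂ) (R : Matrix (Fin m) (Fin m) ℂ)
    (P : Matrix (Fin n) (Fin n) ℂ) : Prop :=
  -Q = A₂ᴴ * mconj P * A₂ -
      A₂ᴴ * mconj P * B₂ * (R + B₂ᴴ * mconj P * B₂)⁻¹ * (B₂ᴴ * mconj P * A₂) - P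

/-- `Q₀ = Q⁻¹ + (A₂ Q⁻¹ A₂^H)^# + (B₂ R⁻¹ B₂^H)^#`. -/
def Qzero (A₂ : Matrix (Fin n) (Fin n) ℂ) (B₂ : Matrix (Fin n) (Fin m) ℂ)
    (Q : Matrix (Fin n) (Fin n) ℂ) (R : Matrix (Fin m) (Fin m) ℂ) :
    Matrix (Fin n) (Fin n) ℂ :=
  Q⁻¹ + mconj (A₂ * Q⁻¹ * A₂ᴴ) + mconj (B₂ * R⁻¹ * B₂ᴴ)

/-!
Put `K = -(R + B₂ᴴ P^# B₂)⁻¹ B₂ᴴ P^# A₂` and `A_c = A₂ + B₂ K`. The Riccati equation says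
`A₂ᴴ P^# A_c = P - Q` and `B₂ᴴ P^# A_c = -R K`; these give `X^{-#} A = s^# (P^# A_c P⁻¹) s⁻¹`,
and `X + Aᴴ X^{-#} A = 1` follows by direct computation.

For another positive definite solution `Y`, the difference `D = X - Y` satisfies
`D - Gᴴ D G ⪰ 0` with `G = F^# F` and `F = X^{-#} A`, hence `D ⪰ (Gᵏ)ᴴ D Gᵏ` for all `k`.
Since `G = (s P) (A_c^# A_c) (s P)⁻¹` and the Riccati equation gives the Stein inequality
`P - (A_c^# A_c)ᴴ P (A_c^# A_c) ⪰ Q ≻ 0`, the powers `Gᵏ` tend to zero, so `D ⪰ 0`.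
-/

section Conj

variable {k l p : Type*}

lemma mconj_eq_transpose_conjTranspose (A : Matrix k l ℂ) : mconj A = Aᴴᵀ := rfl

@[simp] lemma mconj_mconj (A : Matrix k l ℂ) : mconj (mconj A) = A := by
  ext; simp [mconj]

@[simp] lemma mconj_add (A B : Matrix k l ℂ) : mconj (A + B) = mconj A + mconj B :=
  Matrix.map_add _ (map_add _) A B

@[simp] lemma mconj_sub (A B : Matrix k l ℂ) : mconj (A - B) = mconj A - mconj B :=
  Matrix.map_sub _ (map_sub _) A B

@[simp] lemma mconj_mul [Fintype l] (A : Matrix k l ℂ) (B : Matrix l p ℂ) :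
    mconj (A * B) = mconj A * mconj B :=
  Matrix.map_mul

@[simp] lemma mconj_conjTranspose (A : Matrix k l ℂ) : mconj Aᴴ = (mconj A)ᴴ := by
  ext; simp [mconj]

@[simp] lemma mconj_inv [Fintype k] [DecidableEq k] (A : Matrix k k ℂ) :
    mconj A⁻¹ = (mconj A)⁻¹ := by
  rw [mconj_eq_transpose_conjTranspose, mconj_eq_transpose_conjTranspose,
    conjTranspose_nonsing_inv, transpose_nonsing_inv]

lemma Matrix.IsHermitian.mconj_eq {A : Matrix k k ℂ} (hA : A.IsHermitian) : mconj A = Aᵀ := by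
  rw [mconj_eq_transpose_conjTranspose, hA.eq]

lemma Matrix.IsHermitian.mconj {A : Matrix k k ℂ} (hA : A.IsHermitian) :
    (_root_.mconj A).IsHermitian :=
  hA.mconj_eq ▸ hA.transpose

lemma Matrix.PosSemidef.mconj [Fintype k] {A : Matrix k k ℂ} (hA : A.PosSemidef) :
    (_root_.mconj A).PosSemidef :=
  hA.isHermitian.mconj_eq ▸ hA.transpose

lemma Matrix.PosDef.mconj [Fintype k] {A : Matrix k k ℂ} (hA : A.PosDef) :
    (_root_.mconj A).PosDef :=
  hA.isHermitian.mconj_eq ▸ hA.transpose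

end Conj

lemma Matrix.inv_sub_inv_eq_inv_mul_add_mul_inv {ι α : Type*} [Fintype ι] [DecidableEq ι]
    [CommRing α] {X Y : Matrix ι ι α} (hX : IsUnit X) (hY : IsUnit Y) :
    Y⁻¹ - X⁻¹ = X⁻¹ * ((X - Y) + (X - Y) * Y⁻¹ * (X - Y)) * X⁻¹ := by
  have hXY : Y⁻¹ - X⁻¹ = X⁻¹ * (X - Y) * Y⁻¹ := by
    rw [← neg_sub, inv_sub_inv (iff_of_true hX hY), ← neg_sub X Y, mul_neg, neg_mul, neg_neg]
  calc Y⁻¹ - X⁻¹ = Y⁻¹ * (X - Y) * X⁻¹ := inv_sub_inv (iff_of_true hY hX)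
    _ = (X⁻¹ + (Y⁻¹ - X⁻¹)) * (X - Y) * X⁻¹ := by rw [add_sub_cancel]
    _ = X⁻¹ * ((X - Y) + (X - Y) * Y⁻¹ * (X - Y)) * X⁻¹ := by
      rw [hXY]; simp only [Matrix.add_mul, Matrix.mul_add, Matrix.mul_assoc]

lemma Filter.Tendsto.const_matrix_mulVec {α ι κ 𝕜 : Type*} [Fintype κ] [Ring 𝕜]
    [TopologicalSpace 𝕜] [IsTopologicalRing 𝕜] {l : Filter α} {u : α → κ → 𝕜} {x : κ → 𝕜}
    (C : Matrix ι κ 𝕜) (hu : Tendsto u l (𝓝 x)) : Tendsto (fun a => C *ᵥ u a) l (𝓝 (C *ᵥ x)) :=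
  ((continuous_const.matrix_mulVec continuous_id).tendsto x).comp hu

section Stein

variable {𝕜 ι : Type*} [RCLike 𝕜] [Fintype ι]

open scoped MatrixOrder in
lemma Matrix.PosDef.exists_isUnit_eq_conjTranspose_mul_self [DecidableEq ι] {Q : Matrix ι ι 𝕜}
    (hQ : Q.PosDef) : ∃ C : Matrix ι ι 𝕜, IsUnit C ∧ Q = Cᴴ * C := by
  have hQ₀ : 0 ≤ Q := hQ.posSemidef.nonneg
  refine ⟨CFC.sqrt Q, (CFC.isUnit_sqrt_iff Q hQ₀).mpr hQ.isUnit, ?_⟩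
  rw [(nonneg_iff_posSemidef.mp (CFC.sqrt_nonneg Q)).isHermitian.eq, CFC.sqrt_mul_sqrt_self Q hQ₀]

lemma Matrix.IsHermitian.mul_inv_mul_posSemidef [DecidableEq ι] {D M : Matrix ι ι 𝕜}
    (hD : D.IsHermitian) (hM : M.PosDef) : (D * M⁻¹ * D).PosSemidef := by
  simpa only [hD.eq] using hM.inv.posSemidef.conjTranspose_mul_mul_same D

lemma star_mulVec_dotProduct_mulVec (B N : Matrix ι ι 𝕜) (u : ι → 𝕜) :
    star (B *ᵥ u) ⬝ᵥ (N *ᵥ (B *ᵥ u)) = star u ⬝ᵥ ((Bᴴ * N * B) *ᵥ u) := by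
  simp only [star_mulVec, dotProduct_mulVec, vecMul_vecMul]

lemma norm_sq_le_re_star_dotProduct_self (u : ι → 𝕜) (i : ι) :
    ‖u i‖ ^ 2 ≤ RCLike.re (star u ⬝ᵥ u) := by
  have h : RCLike.re (star u ⬝ᵥ u) = ∑ j, ‖u j‖ ^ 2 := by
    simp only [dotProduct, Pi.star_apply, RCLike.star_def, RCLike.conj_mul, map_sum]
    norm_cast
  rw [h]
  exact Finset.single_le_sum (f := fun j => ‖u j‖ ^ 2) (fun j _ => by positivity)
    (Finset.mem_univ i)

lemma tendsto_zero_of_summable_re_star_dotProduct_self {u : ℕ → ι → 𝕜}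
    (h : Summable fun k => RCLike.re (star (u k) ⬝ᵥ u k)) : Tendsto u atTop (𝓝 0) := by
  refine tendsto_pi_nhds.mpr fun i => tendsto_zero_iff_norm_tendsto_zero.mpr ?_
  have hsq : Tendsto (fun k => ‖u k i‖ ^ 2) atTop (𝓝 0) :=
    squeeze_zero (fun k => by positivity)
      (fun k => norm_sq_le_re_star_dotProduct_self (u k) i) h.tendsto_atTop_zero
  simpa using hsq.sqrt

theorem tendsto_pow_mulVec_zero_of_stein [DecidableEq ι] {M P Q : Matrix ι ι 𝕜}
    (hP : P.PosSemidef) (hQ : Q.PosDef) (h : (P - Mᴴ * P * M - Q).PosSemidef) (v : ι → 𝕜) :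
    Tendsto (fun k => M ^ k *ᵥ v) atTop (𝓝 0) := by
  obtain ⟨C, hC, rfl⟩ := hQ.exists_isUnit_eq_conjTranspose_mul_self
  set w : ℕ → ι → 𝕜 := fun k => M ^ k *ᵥ v
  set p : ℕ → ℝ := fun k => RCLike.re (star (w k) ⬝ᵥ (P *ᵥ w k))
  set q : ℕ → ℝ := fun k => RCLike.re (star (C *ᵥ w k) ⬝ᵥ (C *ᵥ w k))
  have hstep : ∀ k, p (k + 1) + q k ≤ p k := by
    intro k
    have h0 := h.re_dotProduct_nonneg (w k)
    have hw : w (k + 1) = M *ᵥ w k := by simp only [w, pow_succ', mulVec_mulVec]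
    have hq : q k = RCLike.re (star (w k) ⬝ᵥ ((Cᴴ * C) *ᵥ w k)) := by
      simp only [q, star_mulVec, ← mulVec_mulVec, dotProduct_mulVec, vecMul_vecMul]
    simp only [sub_mulVec, dotProduct_sub, map_sub, ← star_mulVec_dotProduct_mulVec] at h0
    simp only [p, hw, hq]
    linarith
  have htelescope : ∀ N, ∑ k ∈ Finset.range N, q k + p N ≤ p 0 := by
    intro N
    induction N with
    | zero => simp
    | succ N ih => rw [Finset.sum_range_succ]; linarith [hstep N]
  have hsum : ∀ N, ∑ k ∈ Finset.range N, q k ≤ p 0 := fun N => by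
    linarith [htelescope N, hP.re_dotProduct_nonneg (w N)]
  have hCw : Tendsto (fun k => C *ᵥ w k) atTop (𝓝 0) :=
    tendsto_zero_of_summable_re_star_dotProduct_self <| summable_of_sum_range_le
      (fun k => (RCLike.nonneg_iff.mp (dotProduct_star_self_nonneg _)).1) hsum
  simpa only [w, mulVec_mulVec, nonsing_inv_mul_cancel_left _ _ ((isUnit_iff_isUnit_det C).mp hC),
    mulVec_zero] using hCw.const_matrix_mulVec C⁻¹

lemma tendsto_pow_mulVec_zero_of_semiconj [DecidableEq ι] {S M G : Matrix ι ι 𝕜} (hS : IsUnit S)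
    (h : S * M = G * S) (hM : ∀ v, Tendsto (fun k => M ^ k *ᵥ v) atTop (𝓝 0)) (v : ι → 𝕜) :
    Tendsto (fun k => G ^ k *ᵥ v) atTop (𝓝 0) := by
  have hpow : ∀ k, G ^ k *ᵥ v = S *ᵥ (M ^ k *ᵥ (S⁻¹ *ᵥ v)) := fun k => by
    rw [mulVec_mulVec, mulVec_mulVec, (SemiconjBy.pow_right h k).eq, Matrix.mul_assoc,
      mul_nonsing_inv _ ((isUnit_iff_isUnit_det S).mp hS), mul_one]
  simpa only [hpow, mulVec_zero] using (hM (S⁻¹ *ᵥ v)).const_matrix_mulVec S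

theorem Matrix.IsHermitian.posSemidef_of_stein [DecidableEq ι] {D G : Matrix ι ι 𝕜}
    (hD : D.IsHermitian) (h : (D - Gᴴ * D * G).PosSemidef)
    (hG : ∀ v, Tendsto (fun k => G ^ k *ᵥ v) atTop (𝓝 0)) : D.PosSemidef := by
  refine .of_dotProduct_mulVec_nonneg hD fun v => ?_
  set f : ℕ → 𝕜 := fun k => star (G ^ k *ᵥ v) ⬝ᵥ (D *ᵥ (G ^ k *ᵥ v))
  have hanti : Antitone f := by
    refine antitone_nat_of_succ_le fun k => ?_
    have h0 := h.dotProduct_mulVec_nonneg (G ^ k *ᵥ v)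
    rw [sub_mulVec, dotProduct_sub, ← star_mulVec_dotProduct_mulVec, sub_nonneg] at h0
    simpa only [f, pow_succ', ← mulVec_mulVec] using h0
  have hcont : Continuous fun x : ι → 𝕜 => star x ⬝ᵥ (D *ᵥ x) :=
    continuous_star.dotProduct (continuous_const.matrix_mulVec continuous_id)
  have hf : Tendsto f atTop (𝓝 0) := by
    simpa only [Function.comp_def, mulVec_zero, star_zero, zero_dotProduct] using
      (hcont.tendsto 0).comp (hG v)
  simpa only [f, pow_zero, one_mulVec] using hanti.le_of_tendsto hf 0

end Stein

section NonlinearEq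

variable {ι : Type*} [Fintype ι] [DecidableEq ι] {A X Y : Matrix ι ι ℂ}

lemma sub_eq_of_nonlinearEq (hX : X.PosDef) (hY : Y.PosDef)
    (hXeq : X + Aᴴ * (mconj X)⁻¹ * A = 1) (hYeq : Y + Aᴴ * (mconj Y)⁻¹ * A = 1) :
    X - Y = ((mconj X)⁻¹ * A)ᴴ *
      (mconj (X - Y) + mconj (X - Y) * (mconj Y)⁻¹ * mconj (X - Y)) * ((mconj X)⁻¹ * A) := by
  have hdiff : X - Y = Aᴴ * ((mconj Y)⁻¹ - (mconj X)⁻¹) * A := by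
    calc X - Y = (X + Aᴴ * (mconj X)⁻¹ * A) - (Y + Aᴴ * (mconj Y)⁻¹ * A)
          + (Aᴴ * (mconj Y)⁻¹ * A - Aᴴ * (mconj X)⁻¹ * A) := by abel
      _ = Aᴴ * ((mconj Y)⁻¹ - (mconj X)⁻¹) * A := by
        rw [hXeq, hYeq, sub_self, zero_add, Matrix.mul_sub, Matrix.sub_mul]
  have hXc : ((mconj X)⁻¹)ᴴ = (mconj X)⁻¹ := by
    rw [conjTranspose_nonsing_inv, hX.mconj.isHermitian.eq]
  rw [mconj_sub, hdiff, inv_sub_inv_eq_inv_mul_add_mul_inv hX.mconj.isUnit hY.mconj.isUnit,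
    conjTranspose_mul, hXc]
  simp only [Matrix.mul_assoc]

lemma posSemidef_sub_conj_of_nonlinearEq (hX : X.PosDef) (hY : Y.PosDef)
    (hXeq : X + Aᴴ * (mconj X)⁻¹ * A = 1) (hYeq : Y + Aᴴ * (mconj Y)⁻¹ * A = 1) :
    (X - Y - (X⁻¹ * mconj A * (mconj X)⁻¹ * A)ᴴ * (X - Y) *
      (X⁻¹ * mconj A * (mconj X)⁻¹ * A)).PosSemidef := by
  have hD := sub_eq_of_nonlinearEq hX hY hXeq hYeq
  have hDH : (X - Y).IsHermitian := hX.isHermitian.sub hY.isHermitian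
  set F := (mconj X)⁻¹ * A
  set D := X - Y
  have hG : X⁻¹ * mconj A * (mconj X)⁻¹ * A = mconj F * F := by
    simp only [F, mconj_mul, mconj_inv, mconj_mconj, Matrix.mul_assoc]
  -- `hD` expresses `D` through `D^#` and, conjugated, `D^#` through `D`; chaining the two
  -- expresses `D` through itself.
  have hDc : mconj D = (mconj F)ᴴ * (D + D * Y⁻¹ * D) * mconj F := by
    simpa only [mconj_add, mconj_mul, mconj_inv, mconj_conjTranspose, mconj_mconj] using
      congrArg mconj hD
  rw [Matrix.mul_add, Matrix.add_mul] at hD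
  have hfirst : Fᴴ * mconj D * F = (mconj F * F)ᴴ * D * (mconj F * F)
      + (mconj F * F)ᴴ * (D * Y⁻¹ * D) * (mconj F * F) := by
    rw [hDc]
    simp only [conjTranspose_mul, Matrix.mul_add, Matrix.add_mul, Matrix.mul_assoc]
  have hstein : D - (mconj F * F)ᴴ * D * (mconj F * F) =
      (mconj F * F)ᴴ * (D * Y⁻¹ * D) * (mconj F * F)
        + Fᴴ * (mconj D * (mconj Y)⁻¹ * mconj D) * F := by
    calc D - (mconj F * F)ᴴ * D * (mconj F * F)
        = Fᴴ * mconj D * F + Fᴴ * (mconj D * (mconj Y)⁻¹ * mconj D) * F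
          - (mconj F * F)ᴴ * D * (mconj F * F) := by rw [← hD]
      _ = _ := by rw [hfirst]; abel
  rw [hG, hstein]
  exact ((hDH.mul_inv_mul_posSemidef hY).conjTranspose_mul_mul_same _).add
    ((hDH.mconj.mul_inv_mul_posSemidef hY.mconj).conjTranspose_mul_mul_same F)

theorem posSemidef_sub_of_nonlinearEq (hX : X.PosDef) (hXeq : X + Aᴴ * (mconj X)⁻¹ * A = 1)
    (hstable : ∀ v, Tendsto (fun k => (X⁻¹ * mconj A * (mconj X)⁻¹ * A) ^ k *ᵥ v) atTop (𝓝 0))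
    (hY : Y.PosDef) (hYeq : Y + Aᴴ * (mconj Y)⁻¹ * A = 1) : (X - Y).PosSemidef :=
  (hX.isHermitian.sub hY.isHermitian).posSemidef_of_stein
    (posSemidef_sub_conj_of_nonlinearEq hX hY hXeq hYeq) hstable

end NonlinearEq

section Riccati

variable {𝕜 ι κ : Type*} [Field 𝕜] [StarRing 𝕜] [Fintype ι] [Fintype κ] [DecidableEq κ]
  (A₂ : Matrix ι ι 𝕜) (B₂ : Matrix ι κ 𝕜) (R : Matrix κ κ 𝕜) (P' : Matrix ι ι 𝕜)

def riccatiGain : Matrix κ ι 𝕜 := -((R + B₂ᴴ * P' * B₂)⁻¹ * (B₂ᴴ * P' * A₂))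

def riccatiClosedLoop : Matrix ι ι 𝕜 := A₂ + B₂ * riccatiGain A₂ B₂ R P'

lemma riccatiClosedLoop_state_eq :
    A₂ᴴ * P' * riccatiClosedLoop A₂ B₂ R P' =
      A₂ᴴ * P' * A₂ - A₂ᴴ * P' * B₂ * (R + B₂ᴴ * P' * B₂)⁻¹ * (B₂ᴴ * P' * A₂) := by
  simp only [riccatiClosedLoop, riccatiGain, Matrix.mul_neg, ← sub_eq_add_neg,
    Matrix.mul_sub, Matrix.mul_assoc]

variable {A₂ B₂ R P'}

lemma riccatiClosedLoop_input_eq (hΔ : IsUnit (R + B₂ᴴ * P' * B₂)) :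
    B₂ᴴ * P' * riccatiClosedLoop A₂ B₂ R P' = -(R * riccatiGain A₂ B₂ R P') := by
  set K := riccatiGain A₂ B₂ R P'
  have hK : (R + B₂ᴴ * P' * B₂) * K = -(B₂ᴴ * P' * A₂) := by
    simp only [K, riccatiGain, Matrix.mul_neg]
    rw [mul_nonsing_inv_cancel_left _ _ ((isUnit_iff_isUnit_det _).mp hΔ)]
  calc B₂ᴴ * P' * riccatiClosedLoop A₂ B₂ R P'
      = B₂ᴴ * P' * A₂ + ((R + B₂ᴴ * P' * B₂) * K - R * K) := by
        simp only [riccatiClosedLoop, Matrix.mul_add, Matrix.add_mul, Matrix.mul_assoc, K]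
        abel
    _ = -(R * K) := by rw [hK]; abel

lemma riccatiClosedLoop_conjTranspose_mul_self (hΔ : IsUnit (R + B₂ᴴ * P' * B₂)) :
    (riccatiClosedLoop A₂ B₂ R P')ᴴ * P' * riccatiClosedLoop A₂ B₂ R P' =
      A₂ᴴ * P' * A₂ - A₂ᴴ * P' * B₂ * (R + B₂ᴴ * P' * B₂)⁻¹ * (B₂ᴴ * P' * A₂)
        - (riccatiGain A₂ B₂ R P')ᴴ * R * riccatiGain A₂ B₂ R P' := by
  have hsplit : (riccatiClosedLoop A₂ B₂ R P')ᴴ * P' * riccatiClosedLoop A₂ B₂ R P' =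
      A₂ᴴ * P' * riccatiClosedLoop A₂ B₂ R P' +
        (riccatiGain A₂ B₂ R P')ᴴ * (B₂ᴴ * P' * riccatiClosedLoop A₂ B₂ R P') := by
    rw [show (riccatiClosedLoop A₂ B₂ R P')ᴴ = A₂ᴴ + (riccatiGain A₂ B₂ R P')ᴴ * B₂ᴴ by
      rw [riccatiClosedLoop, conjTranspose_add, conjTranspose_mul]]
    simp only [Matrix.add_mul, Matrix.mul_assoc]
  rw [hsplit, riccatiClosedLoop_state_eq, riccatiClosedLoop_input_eq hΔ, Matrix.mul_neg,
    ← sub_eq_add_neg]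
  simp only [Matrix.mul_assoc]

lemma inv_add_mul_riccatiClosedLoop [DecidableEq ι] {P Q : Matrix ι ι 𝕜} (hP' : IsUnit P')
    (hP : IsUnit P) (hQ : IsUnit Q) (hR : IsUnit R) (hΔ : IsUnit (R + B₂ᴴ * P' * B₂))
    (hstate : A₂ᴴ * P' * riccatiClosedLoop A₂ B₂ R P' = P - Q) :
    (P'⁻¹ + A₂ * Q⁻¹ * A₂ᴴ + B₂ * R⁻¹ * B₂ᴴ) * (P' * riccatiClosedLoop A₂ B₂ R P' * P⁻¹) =
      A₂ * Q⁻¹ := by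
  rw [isUnit_iff_isUnit_det] at hP' hP hQ hR
  have hinput := riccatiClosedLoop_input_eq (A₂ := A₂) hΔ
  set K := riccatiGain A₂ B₂ R P'
  set Ac := riccatiClosedLoop A₂ B₂ R P'
  have h₁ : P'⁻¹ * (P' * Ac * P⁻¹) = Ac * P⁻¹ := by
    rw [Matrix.mul_assoc, nonsing_inv_mul_cancel_left _ _ hP']
  have h₂ : A₂ * Q⁻¹ * A₂ᴴ * (P' * Ac * P⁻¹) = A₂ * Q⁻¹ - A₂ * P⁻¹ := by
    calc A₂ * Q⁻¹ * A₂ᴴ * (P' * Ac * P⁻¹) = A₂ * Q⁻¹ * (A₂ᴴ * P' * Ac) * P⁻¹ := by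
          simp only [Matrix.mul_assoc]
      _ = A₂ * Q⁻¹ - A₂ * P⁻¹ := by
          rw [hstate, Matrix.mul_sub, Matrix.sub_mul, mul_nonsing_inv_cancel_right _ _ hP,
            nonsing_inv_mul_cancel_right _ _ hQ]
  have h₃ : B₂ * R⁻¹ * B₂ᴴ * (P' * Ac * P⁻¹) = -(B₂ * K * P⁻¹) := by
    calc B₂ * R⁻¹ * B₂ᴴ * (P' * Ac * P⁻¹) = B₂ * R⁻¹ * (B₂ᴴ * P' * Ac) * P⁻¹ := by
          simp only [Matrix.mul_assoc]
      _ = -(B₂ * K * P⁻¹) := by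
          rw [hinput, Matrix.mul_neg, ← Matrix.mul_assoc, nonsing_inv_mul_cancel_right _ _ hR,
            Matrix.neg_mul]
  rw [Matrix.add_mul, Matrix.add_mul, h₁, h₂, h₃]
  simp only [Ac, riccatiClosedLoop, Matrix.add_mul]
  abel

end Riccati

lemma posSemidef_stein_mconj_mul_self {ι κ : Type*} [Fintype ι] [Fintype κ]
    {Ac P Q : Matrix ι ι ℂ} {K : Matrix κ ι ℂ} {R : Matrix κ κ ℂ} (hQ : Q.PosSemidef)
    (hR : R.PosSemidef) (h : Acᴴ * mconj P * Ac = P - Q - Kᴴ * R * K) :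
    (P - (mconj Ac * Ac)ᴴ * P * (mconj Ac * Ac) - Q).PosSemidef := by
  have hc : (mconj Ac)ᴴ * P * mconj Ac = mconj P - mconj Q - (mconj K)ᴴ * mconj R * mconj K := by
    simpa only [mconj_mul, mconj_sub, mconj_conjTranspose, mconj_mconj] using congrArg mconj h
  have hexp : (mconj Ac * Ac)ᴴ * P * (mconj Ac * Ac) = P - Q - Kᴴ * R * K
      - Acᴴ * mconj Q * Ac - (mconj K * Ac)ᴴ * mconj R * (mconj K * Ac) := by
    rw [← h, show (mconj Ac * Ac)ᴴ * P * (mconj Ac * Ac) =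
        Acᴴ * ((mconj Ac)ᴴ * P * mconj Ac) * Ac by
      simp only [conjTranspose_mul, Matrix.mul_assoc], hc]
    simp only [Matrix.mul_sub, Matrix.sub_mul, conjTranspose_mul, Matrix.mul_assoc]
  rw [hexp, show ∀ E F G H I : Matrix ι ι ℂ, E - (E - F - G - H - I) - F = G + H + I by
    intros; abel]
  exact ((hR.conjTranspose_mul_mul_same K).add (hQ.mconj.conjTranspose_mul_mul_same Ac)).add
    (hR.mconj.conjTranspose_mul_mul_same _)

section AntiRiccati

variable {A₂ : Matrix (Fin n) (Fin n) ℂ} {B₂ : Matrix (Fin n) (Fin m) ℂ}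
  {Q P : Matrix (Fin n) (Fin n) ℂ} {R : Matrix (Fin m) (Fin m) ℂ}

lemma AntiRiccati.conjTranspose_mul_riccatiClosedLoop (heq : AntiRiccati A₂ B₂ Q R P) :
    A₂ᴴ * mconj P * riccatiClosedLoop A₂ B₂ R (mconj P) = P - Q := by
  unfold AntiRiccati at heq
  rw [riccatiClosedLoop_state_eq, sub_eq_iff_eq_add.mp heq.symm, neg_add_eq_sub]

lemma isUnit_add_conjTranspose_mul_mconj_mul (hR : R.PosDef) (hP : P.PosDef) :
    IsUnit (R + B₂ᴴ * mconj P * B₂) :=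
  (hR.add_posSemidef (hP.mconj.posSemidef.conjTranspose_mul_mul_same B₂)).isUnit

lemma AntiRiccati.posSemidef_stein_riccatiClosedLoop (hQ : Q.PosDef) (hR : R.PosDef)
    (hP : P.PosDef) (heq : AntiRiccati A₂ B₂ Q R P) :
    (P - (mconj (riccatiClosedLoop A₂ B₂ R (mconj P)) * riccatiClosedLoop A₂ B₂ R (mconj P))ᴴ
      * P * (mconj (riccatiClosedLoop A₂ B₂ R (mconj P)) * riccatiClosedLoop A₂ B₂ R (mconj P))
        - Q).PosSemidef := by
  refine posSemidef_stein_mconj_mul_self (K := riccatiGain A₂ B₂ R (mconj P)) hQ.posSemidef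
    hR.posSemidef ?_
  rw [riccatiClosedLoop_conjTranspose_mul_self (isUnit_add_conjTranspose_mul_mconj_mul hR hP),
    ← riccatiClosedLoop_state_eq A₂ B₂ R (mconj P), heq.conjTranspose_mul_riccatiClosedLoop]

variable {s A X : Matrix (Fin n) (Fin n) ℂ}

lemma AntiRiccati.inv_mconj_mul (hQ : Q.PosDef) (hR : R.PosDef) (hP : P.PosDef)
    (heq : AntiRiccati A₂ B₂ Q R P) (hs : s.PosDef) (hA : A = (mconj s)⁻¹ * A₂ * Q⁻¹ * s⁻¹)
    (hX : X = s⁻¹ * (P⁻¹ + mconj (A₂ * Q⁻¹ * A₂ᴴ) + mconj (B₂ * R⁻¹ * B₂ᴴ)) * s⁻¹) :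
    (mconj X)⁻¹ * A = mconj s * (mconj P * riccatiClosedLoop A₂ B₂ R (mconj P) * P⁻¹) * s⁻¹ := by
  have dsc : IsUnit (mconj s).det := (isUnit_iff_isUnit_det _).mp hs.mconj.isUnit
  set U := (mconj P)⁻¹ + A₂ * Q⁻¹ * A₂ᴴ + B₂ * R⁻¹ * B₂ᴴ
  have hU : U.PosDef :=
    (hP.mconj.inv.add_posSemidef (hQ.inv.posSemidef.mul_mul_conjTranspose_same A₂)).add_posSemidef
      (hR.inv.posSemidef.mul_mul_conjTranspose_same B₂)
  have hXinv : (mconj X)⁻¹ = mconj s * U⁻¹ * mconj s := by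
    rw [hX, mconj_mul, mconj_mul, mconj_inv, mconj_add, mconj_add, mconj_inv, mconj_mconj,
      mconj_mconj, Matrix.mul_inv_rev, Matrix.mul_inv_rev, nonsing_inv_nonsing_inv _ dsc,
      ← Matrix.mul_assoc]
  have hUinv : U⁻¹ * (A₂ * Q⁻¹) = mconj P * riccatiClosedLoop A₂ B₂ R (mconj P) * P⁻¹ := by
    rw [← inv_add_mul_riccatiClosedLoop hP.mconj.isUnit hP.isUnit hQ.isUnit hR.isUnit
      (isUnit_add_conjTranspose_mul_mconj_mul hR hP) heq.conjTranspose_mul_riccatiClosedLoop,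
      nonsing_inv_mul_cancel_left _ _ ((isUnit_iff_isUnit_det U).mp hU.isUnit)]
  rw [← hUinv, hXinv, hA]
  simp only [Matrix.mul_assoc]
  rw [mul_nonsing_inv_cancel_left _ _ dsc]

lemma AntiRiccati.solves_nonlinearEq (hQ : Q.PosDef) (hR : R.PosDef) (hP : P.PosDef)
    (heq : AntiRiccati A₂ B₂ Q R P) (hs : s.PosDef) (hsq : s * s = Qzero A₂ B₂ Q R)
    (hA : A = (mconj s)⁻¹ * A₂ * Q⁻¹ * s⁻¹)
    (hX : X = s⁻¹ * (P⁻¹ + mconj (A₂ * Q⁻¹ * A₂ᴴ) + mconj (B₂ * R⁻¹ * B₂ᴴ)) * s⁻¹) :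
    X + Aᴴ * (mconj X)⁻¹ * A = 1 := by
  have ds : IsUnit s.det := (isUnit_iff_isUnit_det _).mp hs.isUnit
  have hAH : Aᴴ = s⁻¹ * Q⁻¹ * A₂ᴴ * (mconj s)⁻¹ := by
    rw [hA]
    simp only [conjTranspose_mul, conjTranspose_nonsing_inv, hs.isHermitian.eq,
      hQ.isHermitian.eq, hs.mconj.isHermitian.eq, Matrix.mul_assoc]
  have hQP : Q⁻¹ * (P - Q) * P⁻¹ = Q⁻¹ - P⁻¹ := by
    rw [Matrix.mul_sub, Matrix.sub_mul, mul_nonsing_inv_cancel_right _ _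
      ((isUnit_iff_isUnit_det _).mp hP.isUnit), nonsing_inv_mul _
      ((isUnit_iff_isUnit_det _).mp hQ.isUnit), Matrix.one_mul]
  have hcorr : Aᴴ * ((mconj X)⁻¹ * A) = s⁻¹ * (Q⁻¹ - P⁻¹) * s⁻¹ := by
    rw [heq.inv_mconj_mul hQ hR hP hs hA hX, hAH, ← hQP,
      ← heq.conjTranspose_mul_riccatiClosedLoop]
    simp only [Matrix.mul_assoc]
    rw [nonsing_inv_mul_cancel_left _ _ ((isUnit_iff_isUnit_det _).mp hs.mconj.isUnit)]
  rw [Matrix.mul_assoc, hcorr, hX, ← Matrix.add_mul, ← Matrix.mul_add,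
    show P⁻¹ + mconj (A₂ * Q⁻¹ * A₂ᴴ) + mconj (B₂ * R⁻¹ * B₂ᴴ) + (Q⁻¹ - P⁻¹) = Qzero A₂ B₂ Q R by
      rw [Qzero]; abel,
    ← hsq, ← Matrix.mul_assoc, nonsing_inv_mul _ ds, Matrix.one_mul, mul_nonsing_inv _ ds]

lemma AntiRiccati.tendsto_pow_mulVec_zero (hQ : Q.PosDef) (hR : R.PosDef) (hP : P.PosDef)
    (heq : AntiRiccati A₂ B₂ Q R P) (hs : s.PosDef) (hA : A = (mconj s)⁻¹ * A₂ * Q⁻¹ * s⁻¹)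
    (hX : X = s⁻¹ * (P⁻¹ + mconj (A₂ * Q⁻¹ * A₂ᴴ) + mconj (B₂ * R⁻¹ * B₂ᴴ)) * s⁻¹)
    (v : Fin n → ℂ) :
    Tendsto (fun k => (X⁻¹ * mconj A * (mconj X)⁻¹ * A) ^ k *ᵥ v) atTop (𝓝 0) := by
  have hG : X⁻¹ * mconj A * (mconj X)⁻¹ * A = mconj ((mconj X)⁻¹ * A) * ((mconj X)⁻¹ * A) := by
    simp only [mconj_mul, mconj_inv, mconj_mconj, Matrix.mul_assoc]
  rw [hG, heq.inv_mconj_mul hQ hR hP hs hA hX]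
  refine tendsto_pow_mulVec_zero_of_semiconj (hs.isUnit.mul hP.isUnit) ?_
    (tendsto_pow_mulVec_zero_of_stein hP.posSemidef hQ
      (heq.posSemidef_stein_riccatiClosedLoop hQ hR hP)) v
  simp only [mconj_mul, mconj_inv, mconj_mconj, Matrix.mul_assoc]
  rw [nonsing_inv_mul_cancel_left _ _ ((isUnit_iff_isUnit_det _).mp hs.mconj.isUnit),
    nonsing_inv_mul_cancel_left _ _ ((isUnit_iff_isUnit_det _).mp hP.mconj.isUnit),
    nonsing_inv_mul_cancel_left _ _ ((isUnit_iff_isUnit_det _).mp hs.isUnit),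
    nonsing_inv_mul _ ((isUnit_iff_isUnit_det _).mp hP.isUnit), Matrix.mul_one]

lemma posDef_inv_mul_add_mconj_mul_inv (hQ : Q.PosDef) (hR : R.PosDef) (hP : P.PosDef)
    (hs : s.PosDef) :
    (s⁻¹ * (P⁻¹ + mconj (A₂ * Q⁻¹ * A₂ᴴ) + mconj (B₂ * R⁻¹ * B₂ᴴ)) * s⁻¹).PosDef := by
  have hW := (hP.inv.add_posSemidef (hQ.inv.posSemidef.mul_mul_conjTranspose_same A₂).mconj
    ).add_posSemidef (hR.inv.posSemidef.mul_mul_conjTranspose_same B₂).mconj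
  simpa only [star_eq_conjTranspose, hs.inv.isHermitian.eq] using
    (IsUnit.posDef_star_left_conjugate_iff hs.inv.isUnit).mpr hW

end AntiRiccati

theorem nonlinearEq_maximal_solution_general
    (A₂ : Matrix (Fin n) (Fin n) ℂ) (B₂ : Matrix (Fin n) (Fin m) ℂ)
    (Q : Matrix (Fin n) (Fin n) ℂ) (R : Matrix (Fin m) (Fin m) ℂ)
    (hQ : Q.PosDef) (hR : R.PosDef)
    (P : Matrix (Fin n) (Fin n) ℂ) (hP : P.PosDef) (heq : AntiRiccati A₂ B₂ Q R P)
    (s : Matrix (Fin n) (Fin n) ℂ) (hs : s.PosDef) (hsq : s * s = Qzero A₂ B₂ Q R)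
    (A : Matrix (Fin n) (Fin n) ℂ) (hA : A = (mconj s)⁻¹ * A₂ * Q⁻¹ * s⁻¹)
    (X : Matrix (Fin n) (Fin n) ℂ)
    (hX : X = s⁻¹ * (P⁻¹ + mconj (A₂ * Q⁻¹ * A₂ᴴ) + mconj (B₂ * R⁻¹ * B₂ᴴ)) * s⁻¹) :
    X.PosDef ∧ X + Aᴴ * (mconj X)⁻¹ * A = 1 ∧
    ∀ Y : Matrix (Fin n) (Fin n) ℂ, Y.PosDef → Y + Aᴴ * (mconj Y)⁻¹ * A = 1 →
      (X - Y).PosSemidef := by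
  have hXpd : X.PosDef := hX ▸ posDef_inv_mul_add_mconj_mul_inv hQ hR hP hs
  have hXeq := heq.solves_nonlinearEq hQ hR hP hs hsq hA hX
  exact ⟨hXpd, hXeq, fun Y hY hYeq => posSemidef_sub_of_nonlinearEq hXpd hXeq
    (heq.tendsto_pow_mulVec_zero hQ hR hP hs hA hX) hY hYeq⟩

/-- If the antilinear system is stabilizable and `P > 0` solves the
anti-Riccati equation, then `X = Q₀^{-1/2}(P⁻¹ + (A₂Q⁻¹A₂^H)^# + (B₂R⁻¹B₂^H)^#)Q₀^{-1/2}`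
is the maximal Hermitian positive definite solution of `X + A^H X^{-#} A = I` with
`A = Q₀^{-#/2} A₂ Q⁻¹ Q₀^{-1/2}`: every Hermitian positive definite solution `Y`
satisfies `Y ≤ X` in the Loewner order. -/
theorem nonlinearEq_maximal_solution
    (A₂ : Matrix (Fin n) (Fin n) ℂ) (B₂ : Matrix (Fin n) (Fin m) ℂ)
    (Q : Matrix (Fin n) (Fin n) ℂ) (R : Matrix (Fin m) (Fin m) ℂ)
    (hQ : Q.PosDef) (hR : R.PosDef)
    (hstab : AntiStabilizable A₂ B₂)
    (P : Matrix (Fin n) (Fin n) ℂ) (hP : P.PosDef) (heq : AntiRiccati A₂ B₂ Q R P)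
    (s : Matrix (Fin n) (Fin n) ℂ) (hs : s.PosDef) (hsq : s * s = Qzero A₂ B₂ Q R)
    (A : Matrix (Fin n) (Fin n) ℂ) (hA : A = (mconj s)⁻¹ * A₂ * Q⁻¹ * s⁻¹)
    (X : Matrix (Fin n) (Fin n) ℂ)
    (hX : X = s⁻¹ * (P⁻¹ + mconj (A₂ * Q⁻¹ * A₂ᴴ) + mconj (B₂ * R⁻¹ * B₂ᴴ)) * s⁻¹) :
    X.PosDef ∧ X + Aᴴ * (mconj X)⁻¹ * A = 1 ∧
    ∀ Y : Matrix (Fin n) (Fin n) ℂ, Y.PosDef → Y + Aᴴ * (mconj Y)⁻¹ * A = 1 →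
      (X - Y).PosSemidef :=
  nonlinearEq_maximal_solution_general A₂ B₂ Q R hQ hR P hP heq s hs hsq A hA X hX
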